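/- arXiv:1304.4378 — 4 statements merged into one kernel-verified Lean document; each statement's English description precedes it below -/
import Mathlib

section
/- Let L be an orthomodular lattice and let p,q,e,f ∈ L with p ⊥ q, e ⊥ f and p ∨ q = e ∨ f. Put p₁ := p ∧ (p ∧ f)^⊥, p₂ := p ∧ f, q₁ := q ∧ e, q₂ := q ∧ (q ∧ e)^⊥, e₁ := e ∧ (e ∧ q)^⊥, and f₂ := f ∧ (f ∧ p)^⊥. Then: (i) p₁ and e₁ are strongly perspective; (ii) q₂ and f₂ are strongly perspective; (iii) p₁ ⊥ p₂ with p₁ ∨ p₂ = p, q₁ ⊥ e₁ with q₁ ∨ e₁ = e, p₂ ⊥ f₂ with p₂ ∨ f₂ = f, and q₁ ⊥ q₂ with q₁ ∨ q₂ = q; (iv) p₁ ⊥ q₁ and p₁ ∨ q₁ is strongly perspective to e; (v) p₂ ⊥ q₂ and p₂ ∨ q₂ is strongly perspective to f. -/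
/-- An orthomodular lattice structure on a bounded lattice `L`:
an orthocomplementation `ortho` such that `ortho p` is a complement of `p`,
`ortho` is an involution and order-reversing, and the orthomodular law holds. -/
structure OMLStruct (L : Type*) [Lattice L] [BoundedOrder L] where
  ortho : L → L
  inf_ortho : ∀ p : L, p ⊓ ortho p = ⊥
  sup_ortho : ∀ p : L, p ⊔ ortho p = ⊤
  ortho_ortho : ∀ p : L, ortho (ortho p) = p
  ortho_anti : ∀ p q : L, p ≤ q → ortho q ≤ ortho p
  orthomodular : ∀ p q : L, p ≤ q → q = p ⊔ (q ⊓ ortho p)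

namespace OMLStruct

variable {L : Type*} [Lattice L] [BoundedOrder L]

/-- `p ⊥ q` in an OML: `p ≤ qᗮ`. -/
def Orth (O : OMLStruct L) (p q : L) : Prop := p ≤ O.ortho q

/-- `e` and `f` are perspective in `L`: they have a common complement. -/
def Perspective (_O : OMLStruct L) (e f : L) : Prop :=
  ∃ v : L, e ⊔ v = ⊤ ∧ e ⊓ v = ⊥ ∧ f ⊔ v = ⊤ ∧ f ⊓ v = ⊥

/-- `e` and `f` are strongly perspective in `L`: they have a common complement
in the interval OML `L[0, e ⊔ f]`. -/
def StronglyPerspective (_O : OMLStruct L) (e f : L) : Prop :=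
  ∃ v : L, v ≤ e ⊔ f ∧ e ⊔ v = e ⊔ f ∧ e ⊓ v = ⊥ ∧ f ⊔ v = e ⊔ f ∧ f ⊓ v = ⊥

end OMLStruct

namespace OMLStruct

variable {L : Type*} [Lattice L] [BoundedOrder L]

variable (O : OMLStruct L)


lemma orth_symm {a b : L} (h : a ≤ O.ortho b) : b ≤ O.ortho a := by
  have := O.ortho_anti _ _ h
  rwa [O.ortho_ortho] at this

lemma inf_orth_bot {a b : L} (h : a ≤ O.ortho b) : a ⊓ b = ⊥ := by
  apply le_antisymm _ bot_le
  calc a ⊓ b ≤ O.ortho b ⊓ b := inf_le_inf_right b h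
    _ = b ⊓ O.ortho b := inf_comm _ _
    _ = ⊥ := O.inf_ortho b

lemma demorgan_sup (a b : L) : O.ortho (a ⊔ b) = O.ortho a ⊓ O.ortho b := by
  apply le_antisymm
  · exact le_inf (O.ortho_anti _ _ le_sup_left) (O.ortho_anti _ _ le_sup_right)
  · have ha : a ≤ O.ortho (O.ortho a ⊓ O.ortho b) := by
      apply O.orth_symm; exact inf_le_left
    have hb : b ≤ O.ortho (O.ortho a ⊓ O.ortho b) := by
      apply O.orth_symm; exact inf_le_right
    exact O.orth_symm (by simpa [O.ortho_ortho] using sup_le ha hb)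

lemma demorgan_inf (a b : L) : O.ortho (a ⊓ b) = O.ortho a ⊔ O.ortho b := by
  have := O.demorgan_sup (O.ortho a) (O.ortho b)
  rw [O.ortho_ortho, O.ortho_ortho] at this
  rw [← this, O.ortho_ortho]

/-- dual orthomodular: if `d ≤ a` then `a ⊓ (d ⊔ aᗮ) = d`. -/
lemma om_dual {a d : L} (h : d ≤ a) : a ⊓ (d ⊔ O.ortho a) = d := by
  have hom := O.orthomodular (O.ortho a) (O.ortho d) (O.ortho_anti _ _ h)
  have := congrArg O.ortho hom
  rw [O.ortho_ortho, O.demorgan_sup, O.ortho_ortho, O.demorgan_inf, O.ortho_ortho] at this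
  exact this.symm

/-- commutation relation -/
def Cm (a b : L) : Prop := a = (a ⊓ b) ⊔ (a ⊓ O.ortho b)

lemma cm_of_le {a b : L} (h : a ≤ b) : O.Cm a b := by
  unfold Cm
  rw [inf_eq_left.mpr h, sup_eq_left.mpr inf_le_left]

lemma cm_of_ge {a b : L} (h : b ≤ a) : O.Cm a b := by
  unfold Cm
  rw [inf_eq_right.mpr h]
  exact O.orthomodular b a h

lemma cm_of_orth {a b : L} (h : a ≤ O.ortho b) : O.Cm a b := by
  unfold Cm
  rw [O.inf_orth_bot h, inf_eq_left.mpr h, bot_sup_eq]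

lemma cm_ortho {a b : L} (h : O.Cm a b) : O.Cm a (O.ortho b) := by
  unfold Cm at h ⊢
  rw [O.ortho_ortho, sup_comm]
  exact h

lemma cm_symm {a b : L} (h : O.Cm a b) : O.Cm b a := by
  have h1 : O.ortho a = O.ortho (a ⊓ b) ⊓ O.ortho (a ⊓ O.ortho b) := by
    conv_lhs => rw [h]
    rw [O.demorgan_sup]
  have hx : b ⊓ O.ortho (a ⊓ b) ≤ O.ortho a := by
    rw [h1]
    refine le_inf inf_le_right (le_trans inf_le_left ?_)
    exact O.orth_symm inf_le_right
  have hom := O.orthomodular (a ⊓ b) b inf_le_right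
  apply le_antisymm
  · calc b = (a ⊓ b) ⊔ (b ⊓ O.ortho (a ⊓ b)) := hom
      _ ≤ (b ⊓ a) ⊔ (b ⊓ O.ortho a) := by
          refine sup_le_sup (le_of_eq (inf_comm a b)) (le_inf inf_le_left hx)
  · exact sup_le inf_le_left inf_le_left

lemma cm_sup {a b c : L} (h1 : O.Cm b a) (h2 : O.Cm c a) : O.Cm (b ⊔ c) a := by
  unfold Cm
  apply le_antisymm
  · have hstep : ((b ⊓ a) ⊔ (b ⊓ O.ortho a)) ⊔ ((c ⊓ a) ⊔ (c ⊓ O.ortho a)) ≤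
        ((b ⊔ c) ⊓ a) ⊔ ((b ⊔ c) ⊓ O.ortho a) := by
      have t1 : b ⊓ a ≤ (b ⊔ c) ⊓ a := inf_le_inf_right _ le_sup_left
      have t2 : b ⊓ O.ortho a ≤ (b ⊔ c) ⊓ O.ortho a := inf_le_inf_right _ le_sup_left
      have t3 : c ⊓ a ≤ (b ⊔ c) ⊓ a := inf_le_inf_right _ le_sup_right
      have t4 : c ⊓ O.ortho a ≤ (b ⊔ c) ⊓ O.ortho a := inf_le_inf_right _ le_sup_right
      exact sup_le (sup_le_sup t1 t2) (sup_le_sup t3 t4)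
    refine le_trans (le_of_eq ?_) hstep
    rw [← h1, ← h2]
  · exact sup_le inf_le_left inf_le_left

/-- Foulis–Holland distributivity (meet form). -/
lemma fh_inf {a b c : L} (hab : O.Cm a b) (hac : O.Cm a c) :
    a ⊓ (b ⊔ c) = (a ⊓ b) ⊔ (a ⊓ c) := by
  have hd : (a ⊓ b) ⊔ (a ⊓ c) ≤ a := sup_le inf_le_left inf_le_left
  have hb : b ≤ ((a ⊓ b) ⊔ (a ⊓ c)) ⊔ O.ortho a := by
    have := O.cm_symm hab
    calc b = (b ⊓ a) ⊔ (b ⊓ O.ortho a) := this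
      _ ≤ ((a ⊓ b) ⊔ (a ⊓ c)) ⊔ O.ortho a :=
        sup_le (le_trans (le_of_eq (inf_comm b a)) (le_sup_of_le_left le_sup_left))
          (le_sup_of_le_right inf_le_right)
  have hc : c ≤ ((a ⊓ b) ⊔ (a ⊓ c)) ⊔ O.ortho a := by
    have := O.cm_symm hac
    calc c = (c ⊓ a) ⊔ (c ⊓ O.ortho a) := this
      _ ≤ ((a ⊓ b) ⊔ (a ⊓ c)) ⊔ O.ortho a :=
        sup_le (le_trans (le_of_eq (inf_comm c a)) (le_sup_of_le_left le_sup_right))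
          (le_sup_of_le_right inf_le_right)
  apply le_antisymm
  · calc a ⊓ (b ⊔ c) ≤ a ⊓ (((a ⊓ b) ⊔ (a ⊓ c)) ⊔ O.ortho a) :=
        inf_le_inf_left a (sup_le hb hc)
      _ = (a ⊓ b) ⊔ (a ⊓ c) := O.om_dual hd
  · exact sup_le (inf_le_inf_left a le_sup_left) (inf_le_inf_left a le_sup_right)

lemma cm_ortho_both {a b : L} (h : O.Cm a b) : O.Cm (O.ortho a) (O.ortho b) :=
  O.cm_symm (O.cm_ortho (O.cm_symm (O.cm_ortho h)))

/-- Foulis–Holland distributivity (join form). -/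
lemma fh_sup {a b c : L} (hab : O.Cm a b) (hac : O.Cm a c) :
    a ⊔ (b ⊓ c) = (a ⊔ b) ⊓ (a ⊔ c) := by
  have h := O.fh_inf (O.cm_ortho_both hab) (O.cm_ortho_both hac)
  have := congrArg O.ortho h
  rw [O.demorgan_inf, O.ortho_ortho, O.demorgan_sup, O.ortho_ortho, O.ortho_ortho,
    O.demorgan_sup, O.demorgan_inf, O.demorgan_inf, O.ortho_ortho, O.ortho_ortho,
    O.ortho_ortho] at this
  exact this

/-- relative complement: if `e ⊥ f` then `eᗮ ⊓ (e ⊔ f) = f`. -/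
lemma rel_compl {e f : L} (hef : e ≤ O.ortho f) : O.ortho e ⊓ (e ⊔ f) = f := by
  have hfe : f ≤ O.ortho e := O.orth_symm hef
  have hle : f ≤ O.ortho e ⊓ (e ⊔ f) := le_inf hfe le_sup_right
  have hom := O.orthomodular f _ hle
  have hres : O.ortho e ⊓ (e ⊔ f) ⊓ O.ortho f ≤ ⊥ := by
    have t1 : O.ortho e ⊓ (e ⊔ f) ⊓ O.ortho f ≤ (e ⊔ f) ⊓ (O.ortho e ⊓ O.ortho f) :=
      le_inf (le_trans inf_le_left inf_le_right)
        (le_inf (le_trans inf_le_left inf_le_left) inf_le_right)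
    have t2 : (e ⊔ f) ⊓ (O.ortho e ⊓ O.ortho f) = ⊥ := by
      rw [← O.demorgan_sup]; exact O.inf_ortho _
    exact le_trans t1 (le_of_eq t2)
  rw [hom, le_antisymm hres bot_le, sup_bot_eq]

/-- Special case: if `p ⊥ q`, `e ⊥ f`, `p ⊔ q = e ⊔ f`, `p ⊓ f = ⊥` and `q ⊓ e = ⊥`,
then `v := q ⊓ (p ⊔ e)` is a common complement of `p` and `e` in `[0, p ⊔ e]`. -/
lemma main_csp {p q e f : L} (hpq : p ≤ O.ortho q) (hef : e ≤ O.ortho f)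
    (hk : p ⊔ q = e ⊔ f) (hpf : p ⊓ f = ⊥) (hqe : q ⊓ e = ⊥) :
    q ⊓ (p ⊔ e) ≤ p ⊔ e ∧ p ⊔ (q ⊓ (p ⊔ e)) = p ⊔ e ∧ p ⊓ (q ⊓ (p ⊔ e)) = ⊥ ∧
    e ⊔ (q ⊓ (p ⊔ e)) = p ⊔ e ∧ e ⊓ (q ⊓ (p ⊔ e)) = ⊥ := by
  have hpe_le : p ⊔ e ≤ p ⊔ q := sup_le le_sup_left (le_trans le_sup_left hk.ge)
  have h2 : p ⊔ (q ⊓ (p ⊔ e)) = p ⊔ e := by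
    rw [O.fh_sup (O.cm_of_orth hpq) (O.cm_of_le (le_sup_left : p ≤ p ⊔ e)),
      ← sup_assoc, sup_idem]
    exact inf_eq_right.mpr hpe_le
  have h3 : p ⊓ (q ⊓ (p ⊔ e)) = ⊥ := by
    apply le_antisymm _ bot_le
    exact le_trans (inf_le_inf_left p inf_le_left) (le_of_eq (O.inf_orth_bot hpq))
  have h5 : e ⊓ (q ⊓ (p ⊔ e)) = ⊥ := by
    apply le_antisymm _ bot_le
    refine le_trans (inf_le_inf_left e inf_le_left) (le_of_eq ?_)
    rw [inf_comm]; exact hqe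
  have hev : e ⊔ (q ⊓ (p ⊔ e)) ≤ p ⊔ e := sup_le le_sup_right inf_le_right
  have hom := O.orthomodular _ _ hev
  have ht_e : (p ⊔ e) ⊓ O.ortho (e ⊔ (q ⊓ (p ⊔ e))) ≤ O.ortho e :=
    le_trans inf_le_right (O.ortho_anti _ _ le_sup_left)
  have ht_v : (p ⊔ e) ⊓ O.ortho (e ⊔ (q ⊓ (p ⊔ e))) ≤ O.ortho (q ⊓ (p ⊔ e)) :=
    le_trans inf_le_right (O.ortho_anti _ _ le_sup_right)
  have ht_f : (p ⊔ e) ⊓ O.ortho (e ⊔ (q ⊓ (p ⊔ e))) ≤ f := by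
    have h' : (p ⊔ e) ⊓ O.ortho (e ⊔ (q ⊓ (p ⊔ e))) ≤ O.ortho e ⊓ (e ⊔ f) :=
      le_inf ht_e (le_trans inf_le_left (le_trans hpe_le hk.le))
    exact le_trans h' (le_of_eq (O.rel_compl hef))
  have hpv : p ≤ O.ortho (q ⊓ (p ⊔ e)) :=
    le_trans hpq (O.ortho_anti _ _ inf_le_left)
  have hfh := O.fh_inf (O.cm_of_ge hpv)
    (O.cm_symm (O.cm_ortho (O.cm_of_le (le_refl (q ⊓ (p ⊔ e))))))
  rw [inf_eq_right.mpr hpv] at hfh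
  have hov : O.ortho (q ⊓ (p ⊔ e)) ⊓ (q ⊓ (p ⊔ e)) = ⊥ := by
    rw [inf_comm]; exact O.inf_ortho _
  rw [hov, sup_bot_eq] at hfh
  have ht_p : (p ⊔ e) ⊓ O.ortho (e ⊔ (q ⊓ (p ⊔ e))) ≤ p := by
    have h' : (p ⊔ e) ⊓ O.ortho (e ⊔ (q ⊓ (p ⊔ e))) ≤
        O.ortho (q ⊓ (p ⊔ e)) ⊓ (p ⊔ (q ⊓ (p ⊔ e))) := by
      refine le_inf ht_v ?_
      rw [h2]; exact inf_le_left
    exact le_trans h' (le_of_eq hfh)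
  have ht0 : (p ⊔ e) ⊓ O.ortho (e ⊔ (q ⊓ (p ⊔ e))) = ⊥ :=
    le_antisymm (le_trans (le_inf ht_p ht_f) hpf.le) bot_le
  rw [ht0, sup_bot_eq] at hom
  exact ⟨inf_le_right, h2, h3, hom.symm, h5⟩

/-- If `x ≤ k`, `x ⊥ m` and `k ≤ m ⊔ x` then `x = k ⊓ mᗮ`. -/
lemma eq_inf_ortho {x k m : L} (hxk : x ≤ k) (hxm : x ≤ O.ortho m)
    (hcov : k ≤ m ⊔ x) : x = k ⊓ O.ortho m := by
  have hle : x ≤ k ⊓ O.ortho m := le_inf hxk hxm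
  have hom := O.orthomodular x _ hle
  have hres : k ⊓ O.ortho m ⊓ O.ortho x ≤ ⊥ := by
    have h1 : k ⊓ O.ortho m ⊓ O.ortho x ≤ k ⊓ O.ortho (m ⊔ x) := by
      rw [O.demorgan_sup]
      exact le_inf (le_trans inf_le_left inf_le_left)
        (le_inf (le_trans inf_le_left inf_le_right) inf_le_right)
    have h2 : k ⊓ O.ortho (m ⊔ x) ≤ k ⊓ O.ortho k :=
      inf_le_inf_left k (O.ortho_anti _ _ hcov)
    exact le_trans h1 (le_trans h2 (le_of_eq (O.inf_ortho k)))
  rw [hom, le_antisymm hres bot_le, sup_bot_eq]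

/-- Parts (i) and (iv) of the theorem. -/
lemma parts (O : OMLStruct L) {p q e f : L} (hpq : p ≤ O.ortho q) (hef : e ≤ O.ortho f)
    (hk : p ⊔ q = e ⊔ f) :
    O.StronglyPerspective (p ⊓ O.ortho (p ⊓ f)) (e ⊓ O.ortho (e ⊓ q)) ∧
    ((p ⊓ O.ortho (p ⊓ f)) ≤ O.ortho (q ⊓ e) ∧
      O.StronglyPerspective ((p ⊓ O.ortho (p ⊓ f)) ⊔ (q ⊓ e)) e) := by
  have hqp : q ≤ O.ortho p := O.orth_symm hpq
  have hfe : f ≤ O.ortho e := O.orth_symm hef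
  set p2 := p ⊓ f with hp2def
  set q1 := q ⊓ e with hq1def
  set p1 := p ⊓ O.ortho p2 with hp1def
  set q2 := q ⊓ O.ortho q1 with hq2def
  set e1 := e ⊓ O.ortho (e ⊓ q) with he1def
  set f2 := f ⊓ O.ortho (f ⊓ p) with hf2def
  have hOeq : O.ortho (e ⊓ q) = O.ortho q1 := by rw [hq1def, inf_comm q e]
  have hOfp : O.ortho (f ⊓ p) = O.ortho p2 := by rw [hp2def, inf_comm p f]
  have hp1p : p1 ≤ p := inf_le_left
  have hq2q : q2 ≤ q := inf_le_left
  have he1e : e1 ≤ e := inf_le_left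
  have hf2f : f2 ≤ f := inf_le_left
  -- decompositions
  have hdp : p2 ⊔ p1 = p := (O.orthomodular p2 p inf_le_left).symm
  have hdq : q1 ⊔ q2 = q := (O.orthomodular q1 q inf_le_left).symm
  have hde : q1 ⊔ e1 = e := by
    rw [hq1def, inf_comm q e]
    exact (O.orthomodular (e ⊓ q) e inf_le_left).symm
  have hdf : p2 ⊔ f2 = f := by
    rw [hp2def, inf_comm p f]
    exact (O.orthomodular (f ⊓ p) f inf_le_left).symm
  -- step A : p1 ⊔ q2 = e1 ⊔ f2
  have u1 : p1 ≤ O.ortho (p2 ⊔ q1) := by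
    rw [O.demorgan_sup]
    exact le_inf inf_le_right
      (le_trans hp1p (le_trans hpq (O.ortho_anti _ _ inf_le_left)))
  have u2 : q2 ≤ O.ortho (p2 ⊔ q1) := by
    rw [O.demorgan_sup]
    exact le_inf (le_trans hq2q (le_trans hqp (O.ortho_anti _ _ inf_le_left)))
      inf_le_right
  have u3 : e1 ≤ O.ortho (p2 ⊔ q1) := by
    rw [O.demorgan_sup]
    exact le_inf (le_trans he1e (le_trans hef (O.ortho_anti _ _ inf_le_right)))
      (le_trans inf_le_right (le_of_eq hOeq))
  have u4 : f2 ≤ O.ortho (p2 ⊔ q1) := by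
    rw [O.demorgan_sup]
    exact le_inf (le_trans inf_le_right (le_of_eq hOfp))
      (le_trans hf2f (le_trans hfe (O.ortho_anti _ _ inf_le_right)))
  have hA : p1 ⊔ q2 = (p ⊔ q) ⊓ O.ortho (p2 ⊔ q1) := by
    refine O.eq_inf_ortho (sup_le (le_trans hp1p le_sup_left) (le_trans hq2q le_sup_right))
      (sup_le u1 u2) ?_
    have hcp : p ≤ (p2 ⊔ q1) ⊔ (p1 ⊔ q2) := by
      rw [← hdp]
      exact sup_le (le_sup_of_le_left le_sup_left) (le_sup_of_le_right le_sup_left)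
    have hcq : q ≤ (p2 ⊔ q1) ⊔ (p1 ⊔ q2) := by
      rw [← hdq]
      exact sup_le (le_sup_of_le_left le_sup_right) (le_sup_of_le_right le_sup_right)
    exact sup_le hcp hcq
  have hB : e1 ⊔ f2 = (e ⊔ f) ⊓ O.ortho (p2 ⊔ q1) := by
    refine O.eq_inf_ortho (sup_le (le_trans he1e le_sup_left) (le_trans hf2f le_sup_right))
      (sup_le u3 u4) ?_
    have hce : e ≤ (p2 ⊔ q1) ⊔ (e1 ⊔ f2) := by
      rw [← hde]
      exact sup_le (le_sup_of_le_left le_sup_right) (le_sup_of_le_right le_sup_left)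
    have hcf : f ≤ (p2 ⊔ q1) ⊔ (e1 ⊔ f2) := by
      rw [← hdf]
      exact sup_le (le_sup_of_le_left le_sup_left) (le_sup_of_le_right le_sup_right)
    exact sup_le hce hcf
  have hk' : p1 ⊔ q2 = e1 ⊔ f2 := by rw [hA, hB, hk]
  -- step B : apply the special-case lemma
  have hpq' : p1 ≤ O.ortho q2 :=
    le_trans hp1p (le_trans hpq (O.ortho_anti _ _ inf_le_left))
  have hef' : e1 ≤ O.ortho f2 :=
    le_trans he1e (le_trans hef (O.ortho_anti _ _ inf_le_left))
  have hpf' : p1 ⊓ f2 = ⊥ := by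
    apply le_antisymm _ bot_le
    have h1 : p1 ⊓ f2 ≤ p2 ⊓ O.ortho p2 :=
      le_inf (le_inf (le_trans inf_le_left hp1p) (le_trans inf_le_right hf2f))
        (le_trans inf_le_left inf_le_right)
    exact le_trans h1 (le_of_eq (O.inf_ortho p2))
  have hqe' : q2 ⊓ e1 = ⊥ := by
    apply le_antisymm _ bot_le
    have h1 : q2 ⊓ e1 ≤ q1 ⊓ O.ortho q1 :=
      le_inf (le_inf (le_trans inf_le_left hq2q) (le_trans inf_le_right he1e))
        (le_trans inf_le_left inf_le_right)
    exact le_trans h1 (le_of_eq (O.inf_ortho q1))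
  obtain ⟨hv1, hv2, hv3, hv4, hv5⟩ := O.main_csp hpq' hef' hk' hpf' hqe'
  refine ⟨⟨q2 ⊓ (p1 ⊔ e1), hv1, hv2, hv3, hv4, hv5⟩, ?_, ?_⟩
  · exact le_trans hp1p (le_trans hpq (O.ortho_anti _ _ inf_le_left))
  -- part (iv)
  have hsre : (p1 ⊔ q1) ⊔ e = p1 ⊔ e := by
    rw [sup_assoc, sup_eq_right.mpr (inf_le_right : q1 ≤ e)]
  refine ⟨q2 ⊓ (p1 ⊔ e1), ?_, ?_, ?_, ?_, ?_⟩
  · rw [hsre]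
    exact le_trans hv1 (sup_le_sup_left he1e p1)
  · rw [hsre]
    calc (p1 ⊔ q1) ⊔ (q2 ⊓ (p1 ⊔ e1)) = (p1 ⊔ (q2 ⊓ (p1 ⊔ e1))) ⊔ q1 := by
          rw [sup_assoc, sup_assoc, sup_comm q1 (q2 ⊓ (p1 ⊔ e1))]
      _ = (p1 ⊔ e1) ⊔ q1 := by rw [hv2]
      _ = p1 ⊔ (q1 ⊔ e1) := by rw [sup_assoc, sup_comm e1 q1]
      _ = p1 ⊔ e := by rw [hde]
  · apply le_antisymm _ bot_le
    have hp1q : p1 ≤ O.ortho q := le_trans hp1p hpq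
    have hfh2 : q ⊓ (p1 ⊔ q1) = q1 := by
      rw [O.fh_inf (O.cm_of_orth (O.orth_symm hp1q)) (O.cm_of_ge inf_le_left),
        O.inf_orth_bot (O.orth_symm hp1q), inf_eq_right.mpr (inf_le_left : q1 ≤ q),
        bot_sup_eq]
    have h1 : (p1 ⊔ q1) ⊓ (q2 ⊓ (p1 ⊔ e1)) ≤ (q ⊓ (p1 ⊔ q1)) ⊓ O.ortho q1 :=
      le_inf (le_inf (le_trans inf_le_right (le_trans inf_le_left hq2q)) inf_le_left)
        (le_trans inf_le_right (le_trans inf_le_left inf_le_right))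
    rw [hfh2] at h1
    exact le_trans h1 (le_of_eq (O.inf_ortho q1))
  · rw [hsre]
    calc e ⊔ (q2 ⊓ (p1 ⊔ e1)) = (q1 ⊔ e1) ⊔ (q2 ⊓ (p1 ⊔ e1)) := by rw [hde]
      _ = q1 ⊔ (e1 ⊔ (q2 ⊓ (p1 ⊔ e1))) := by rw [sup_assoc]
      _ = q1 ⊔ (e1 ⊔ (q2 ⊓ (p1 ⊔ e1))) := rfl
      _ = q1 ⊔ (p1 ⊔ e1) := by rw [hv4]
      _ = p1 ⊔ (q1 ⊔ e1) := by rw [← sup_assoc, ← sup_assoc, sup_comm q1 p1]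
      _ = p1 ⊔ e := by rw [hde]
  · apply le_antisymm _ bot_le
    have h1 : e ⊓ (q2 ⊓ (p1 ⊔ e1)) ≤ q1 ⊓ O.ortho q1 :=
      le_inf (le_inf (le_trans inf_le_right (le_trans inf_le_left hq2q)) inf_le_left)
        (le_trans inf_le_right (le_trans inf_le_left inf_le_right))
    exact le_trans h1 (le_of_eq (O.inf_ortho q1))

end OMLStruct

/-- Theorem 3.4 of "Symmetries in Synaptic Algebras": decomposition of two
orthogonal decompositions of the same element into strongly perspective pieces. -/
theorem stmt0 {L : Type*} [Lattice L] [BoundedOrder L] (O : OMLStruct L)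
    (p q e f : L) (hpq : O.Orth p q) (hef : O.Orth e f) (hk : p ⊔ q = e ⊔ f) :
    O.StronglyPerspective (p ⊓ O.ortho (p ⊓ f)) (e ⊓ O.ortho (e ⊓ q)) ∧
    O.StronglyPerspective (q ⊓ O.ortho (q ⊓ e)) (f ⊓ O.ortho (f ⊓ p)) ∧
    (O.Orth (p ⊓ O.ortho (p ⊓ f)) (p ⊓ f) ∧ (p ⊓ O.ortho (p ⊓ f)) ⊔ (p ⊓ f) = p ∧
     O.Orth (q ⊓ e) (e ⊓ O.ortho (e ⊓ q)) ∧ (q ⊓ e) ⊔ (e ⊓ O.ortho (e ⊓ q)) = e ∧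
     O.Orth (p ⊓ f) (f ⊓ O.ortho (f ⊓ p)) ∧ (p ⊓ f) ⊔ (f ⊓ O.ortho (f ⊓ p)) = f ∧
     O.Orth (q ⊓ e) (q ⊓ O.ortho (q ⊓ e)) ∧ (q ⊓ e) ⊔ (q ⊓ O.ortho (q ⊓ e)) = q) ∧
    (O.Orth (p ⊓ O.ortho (p ⊓ f)) (q ⊓ e) ∧
     O.StronglyPerspective ((p ⊓ O.ortho (p ⊓ f)) ⊔ (q ⊓ e)) e) ∧
    (O.Orth (p ⊓ f) (q ⊓ O.ortho (q ⊓ e)) ∧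
     O.StronglyPerspective ((p ⊓ f) ⊔ (q ⊓ O.ortho (q ⊓ e))) f) := by
  have hpq' : p ≤ O.ortho q := hpq
  have hef' : e ≤ O.ortho f := hef
  have hqp : q ≤ O.ortho p := O.orth_symm hpq'
  have hfe : f ≤ O.ortho e := O.orth_symm hef'
  have hk2 : q ⊔ p = f ⊔ e := by rw [sup_comm q p, sup_comm f e]; exact hk
  obtain ⟨i1, i4a, i4b⟩ := OMLStruct.parts O hpq' hef' hk
  obtain ⟨ii1, v2a, v2b⟩ := OMLStruct.parts O hqp hfe hk2
  refine ⟨i1, ii1, ⟨?_, ?_, ?_, ?_, ?_, ?_, ?_, ?_⟩, ⟨i4a, i4b⟩, ?_, ?_⟩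
  · exact inf_le_right
  · rw [sup_comm]
    exact (O.orthomodular (p ⊓ f) p inf_le_left).symm
  · show q ⊓ e ≤ O.ortho (e ⊓ O.ortho (e ⊓ q))
    rw [inf_comm q e]
    exact O.orth_symm inf_le_right
  · rw [inf_comm q e]
    exact (O.orthomodular (e ⊓ q) e inf_le_left).symm
  · show p ⊓ f ≤ O.ortho (f ⊓ O.ortho (f ⊓ p))
    rw [inf_comm p f]
    exact O.orth_symm inf_le_right
  · rw [inf_comm p f]
    exact (O.orthomodular (f ⊓ p) f inf_le_left).symm
  · exact O.orth_symm inf_le_right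
  · exact (O.orthomodular (q ⊓ e) q inf_le_left).symm
  · exact O.orth_symm v2a
  · rw [sup_comm (p ⊓ f) (q ⊓ O.ortho (q ⊓ e))]
    exact v2b
end

section
/- Let A be a synaptic algebra with projection lattice P. Then the center of the orthomodular lattice P (the set of projections compatible with every projection) equals P ∩ C(P), and moreover P ∩ C(P) = P ∩ C(A); that is, the central projections of the OML P are exactly the projections commuting with every element of A. -/
/-- For subsets `A, B` of a ring `R`, the commutant of `B` within `A`:
`C(B) = {x ∈ A : x b = b x for all b ∈ B}`. -/
def SynComm {R : Type*} [Ring R] (A : Set R) (B : Set R) : Set R :=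
  {x | x ∈ A ∧ ∀ b ∈ B, x * b = b * x}

/-- A synaptic algebra: a real vector subspace `A` of a real linear associative
algebra `R` with unity, satisfying axioms SA1–SA8 of Foulis.  The partial order
is recorded as a relation `le` on `R`, whose axioms are imposed on elements of
`A`; `1` is an order unit, the order is archimedean, and the norm convergence
occurring in SA8 is expressed via the order-unit characterization
`‖a‖ ≤ ε ↔ -ε•1 ≤ a ≤ ε•1`. -/
structure SynapticAlgebra (R : Type*) [Ring R] [Algebra ℝ R] where
  A : Set R
  zero_mem : (0 : R) ∈ A
  one_mem : (1 : R) ∈ A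
  add_mem : ∀ {a b : R}, a ∈ A → b ∈ A → a + b ∈ A
  smul_mem : ∀ (r : ℝ) {a : R}, a ∈ A → r • a ∈ A
  /-- the partial order on `A` (SA1) -/
  le : R → R → Prop
  le_refl : ∀ a ∈ A, le a a
  le_trans : ∀ a ∈ A, ∀ b ∈ A, ∀ c ∈ A, le a b → le b c → le a c
  le_antisymm : ∀ a ∈ A, ∀ b ∈ A, le a b → le b a → a = b
  add_le_add : ∀ a ∈ A, ∀ b ∈ A, ∀ c ∈ A, le a b → le (a + c) (b + c)
  smul_nonneg : ∀ (r : ℝ), 0 ≤ r → ∀ a ∈ A, le 0 a → le 0 (r • a)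
  /-- SA1: the ordered vector space `A` is archimedean -/
  archimedean : ∀ a ∈ A, ∀ b ∈ A, (∀ n : ℕ, le (n • a) b) → le a 0
  /-- SA1: `1` is an order unit for `A` -/
  orderUnit : ∀ a ∈ A, ∃ r : ℝ, le a (r • (1 : R))
  /-- SA2 (together with closure of `A` under squaring) -/
  sq_mem : ∀ a ∈ A, a * a ∈ A
  sq_nonneg : ∀ a ∈ A, le 0 (a * a)
  /-- SA3 -/
  SA3 : ∀ a ∈ A, ∀ b ∈ A, le 0 a → le 0 b → le 0 (a * b * a)
  /-- SA4 -/
  SA4 : ∀ a ∈ A, ∀ b ∈ A, le 0 b → a * b * a = 0 → a * b = 0 ∧ b * a = 0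
  /-- SA5: positive elements have square roots in `CC(a)` -/
  SA5 : ∀ a ∈ A, le 0 a →
    ∃ b ∈ SynComm A (SynComm A {a}), le 0 b ∧ b * b = a
  /-- SA6: existence of carrier projections -/
  SA6 : ∀ a ∈ A, ∃ p ∈ A, p * p = p ∧ ∀ b ∈ A, (a * b = 0 ↔ p * b = 0)
  /-- SA7: elements above `1` are invertible -/
  SA7 : ∀ a ∈ A, le 1 a → ∃ b ∈ A, a * b = 1 ∧ b * a = 1
  /-- SA8: commutants are closed under norm limits of ascending commuting sequences -/
  SA8 : ∀ a ∈ A, ∀ b ∈ A, ∀ f : ℕ → R, (∀ n, f n ∈ A) →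
    (∀ n, f n * b = b * f n) → (∀ n m, f n * f m = f m * f n) →
    (∀ n, le (f n) (f (n + 1))) →
    (∀ ε : ℝ, 0 < ε → ∃ N : ℕ, ∀ n ≥ N,
        le (a - f n) (ε • (1 : R)) ∧ le ((-ε) • (1 : R)) (a - f n)) →
    a * b = b * a
  /-- non-degeneracy: `0 ≠ 1` -/
  nondegenerate : (0 : R) ≠ 1

namespace SynapticAlgebra

variable {R : Type*} [Ring R] [Algebra ℝ R] (S : SynapticAlgebra R)

/-- The set `P` of projections of the synaptic algebra. -/
def Proj : Set R := {p | p ∈ S.A ∧ p * p = p}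

/-- A symmetry: an element `s ∈ A` with `s² = 1`. -/
def IsSymmetry (s : R) : Prop := s ∈ S.A ∧ s * s = 1

/-- Projections `e` and `f` are exchanged by a symmetry. -/
def ExchBySym (e f : R) : Prop := ∃ s, S.IsSymmetry s ∧ s * e * s = f

/-- `p ∼ q`: equivalence of projections induced by finite sequences of
symmetries, i.e. `q = sₙ ⋯ s₁ p s₁ ⋯ sₙ`. -/
def Equiv (p q : R) : Prop := Relation.ReflTransGen S.ExchBySym p q

/-- `p` and `q` are related: they have nonzero equivalent subprojections. -/
def Related (p q : R) : Prop :=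
  ∃ p₁ ∈ S.Proj, ∃ q₁ ∈ S.Proj, p₁ ≠ 0 ∧ q₁ ≠ 0 ∧
    S.le p₁ p ∧ S.le q₁ q ∧ S.Equiv p₁ q₁

/-- `p ≼ q`: `p` is equivalent to a subprojection of `q`. -/
def SubEquiv (p q : R) : Prop := ∃ q₁ ∈ S.Proj, S.le q₁ q ∧ S.Equiv p q₁

/-- `c` commutes with every element of `A` (so a projection `c` with this
property is a central projection, `c ∈ P ∩ C(A)`). -/
def IsCentral (c : R) : Prop := ∀ a ∈ S.A, c * a = a * c

/-- `m = e ∧ f`, the infimum of `e` and `f` in the projection lattice `P`. -/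
def IsMeet (e f m : R) : Prop :=
  m ∈ S.Proj ∧ S.le m e ∧ S.le m f ∧
    ∀ r ∈ S.Proj, S.le r e → S.le r f → S.le r m

/-- `j = e ∨ f`, the supremum of `e` and `f` in the projection lattice `P`. -/
def IsJoin (e f j : R) : Prop :=
  j ∈ S.Proj ∧ S.le e j ∧ S.le f j ∧
    ∀ r ∈ S.Proj, S.le e r → S.le f r → S.le j r

/-- `m = ⋁ Q`, the supremum of the set `Q` in the projection lattice `P`. -/
def IsSupOf (Q : Set R) (m : R) : Prop :=
  m ∈ S.Proj ∧ (∀ q ∈ Q, S.le q m) ∧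
    ∀ b ∈ S.Proj, (∀ q ∈ Q, S.le q b) → S.le m b

/-- `m = ⋀ Q`, the infimum of the set `Q` in the projection lattice `P`. -/
def IsInfOf (Q : Set R) (m : R) : Prop :=
  m ∈ S.Proj ∧ (∀ q ∈ Q, S.le m q) ∧
    ∀ b ∈ S.Proj, (∀ q ∈ Q, S.le b q) → S.le b m

/-- The projection lattice `P` is a complete lattice: every subset of `P`
has a supremum and an infimum in `P`. -/
def ProjComplete : Prop :=
  ∀ Q ⊆ S.Proj, (∃ m, S.IsSupOf Q m) ∧ (∃ m, S.IsInfOf Q m)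

/-- The projection lattice `P` is centrally orthocomplete: every family of
projections dominated by a pairwise orthogonal family of central projections
has a supremum in `P`. -/
def CentrallyOrthocomplete : Prop :=
  ∀ Q ⊆ S.Proj, ∀ c : R → R,
    (∀ q ∈ Q, c q ∈ S.Proj ∧ S.IsCentral (c q) ∧ S.le q (c q)) →
    (∀ q ∈ Q, ∀ q' ∈ Q, q ≠ q' → c q * c q' = 0) →
    ∃ m, S.IsSupOf Q m

/-- `c = γ p`: `c` is the central cover of `p`, the smallest central
projection dominating `p`. -/
def IsCentralCover (p c : R) : Prop :=
  c ∈ S.Proj ∧ S.IsCentral c ∧ S.le p c ∧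
    ∀ d ∈ S.Proj, S.IsCentral d → S.le p d → S.le c d

/-- `x = φ_e(f) = e ∧ (e^⊥ ∨ f)`, the Sasaki projection of `f` determined
by `e`, in the projection lattice `P` (where `e^⊥ = 1 - e`). -/
def IsSasaki (e f x : R) : Prop :=
  ∃ j, S.IsJoin (1 - e) f j ∧ S.IsMeet e j x

/-- Mackey compatibility of projections `p` and `q` in the OML `P`:
there are pairwise orthogonal projections `p₁, q₁, d` with `p = p₁ ∨ d = p₁ + d`
and `q = q₁ ∨ d = q₁ + d` (orthogonal projections satisfy `pq = qp = 0` and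
their join is their sum). -/
def Compatible (p q : R) : Prop :=
  ∃ p₁ ∈ S.Proj, ∃ q₁ ∈ S.Proj, ∃ d ∈ S.Proj,
    p₁ * q₁ = 0 ∧ q₁ * p₁ = 0 ∧ p₁ * d = 0 ∧ d * p₁ = 0 ∧
    q₁ * d = 0 ∧ d * q₁ = 0 ∧ p = p₁ + d ∧ q = q₁ + d

end SynapticAlgebra
namespace SynapticAlgebra

variable {R : Type*} [Ring R] [Algebra ℝ R] (S : SynapticAlgebra R)

lemma half_two' (x : R) : (1/2 : ℝ) • (x + x) = x := by
  rw [← two_smul ℝ x, smul_smul]; norm_num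

lemma neg_mem' {a : R} (ha : a ∈ S.A) : -a ∈ S.A := by
  have := S.smul_mem (-1) ha; rwa [neg_one_smul] at this

lemma sub_mem' {a b : R} (ha : a ∈ S.A) (hb : b ∈ S.A) : a - b ∈ S.A := by
  rw [sub_eq_add_neg]; exact S.add_mem ha (S.neg_mem' hb)

lemma jord_mem {a b : R} (ha : a ∈ S.A) (hb : b ∈ S.A) : a*b + b*a ∈ S.A := by
  have h : a*b + b*a = (a+b)*(a+b) - a*a - b*b := by noncomm_ring
  rw [h]
  exact S.sub_mem' (S.sub_mem' (S.sq_mem _ (S.add_mem ha hb)) (S.sq_mem _ ha)) (S.sq_mem _ hb)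

lemma mul_mem_of_comm {a b : R} (ha : a ∈ S.A) (hb : b ∈ S.A) (h : a*b = b*a) :
    a*b ∈ S.A := by
  have h2 : a*b = (1/2:ℝ) • (a*b + b*a) := by rw [← h, half_two']
  rw [h2]; exact S.smul_mem _ (S.jord_mem ha hb)

lemma conj_mem {a b : R} (ha : a ∈ S.A) (hb : b ∈ S.A) : a*b*a ∈ S.A := by
  have h : a*b*a = (1/2:ℝ) • ((a*(a*b+b*a) + (a*b+b*a)*a) - ((a*a)*b + b*(a*a))) := by
    rw [← half_two' (a*b*a)]; congr 1; noncomm_ring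
  rw [h]
  exact S.smul_mem _ (S.sub_mem' (S.jord_mem ha (S.jord_mem ha hb))
    (S.jord_mem (S.sq_mem _ ha) hb))

lemma comm_of_commP {p : R} (hpA : p ∈ S.A) (hp2 : p*p = p)
    (hP : ∀ q ∈ S.Proj, p * q = q * p) {a : R} (ha : a ∈ S.A) : p * a = a * p := by
  set s : R := p + p - 1 with hs_def
  have hsA : s ∈ S.A := S.sub_mem' (S.add_mem hpA hpA) S.one_mem
  have hs2 : s * s = 1 := by
    simp only [hs_def, sub_mul, mul_sub, add_mul, mul_add, hp2, one_mul, mul_one]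
    abel
  set c : R := a - s * a * s with hc_def
  have hcA : c ∈ S.A := S.sub_mem' ha (S.conj_mem hsA ha)
  have hsc_eq : s * c = s * a - a * s := by
    rw [hc_def, mul_sub]
    congr 1
    calc s * (s * a * s) = (s*s) * a * s := by noncomm_ring
    _ = a * s := by rw [hs2, one_mul]
  have hcs_eq : c * s = a * s - s * a := by
    rw [hc_def, sub_mul]
    congr 1
    calc (s * a * s) * s = s * a * (s * s) := by noncomm_ring
    _ = s * a := by rw [hs2, mul_one]
  have hsc : s * c = -(c * s) := by rw [hsc_eq, hcs_eq]; abel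
  have hcs : c * s = -(s * c) := by rw [hsc_eq, hcs_eq]; abel
  have hsc2 : s * (c * c) = (c * c) * s := by
    calc s * (c * c) = (s * c) * c := by rw [mul_assoc]
    _ = -(c * s) * c := by rw [hsc]
    _ = -(c * (s * c)) := by rw [neg_mul, mul_assoc]
    _ = -(c * (-(c * s))) := by rw [hsc]
    _ = (c * c) * s := by rw [mul_neg, neg_neg, mul_assoc]
  have hccA : c * c ∈ S.A := S.sq_mem _ hcA
  obtain ⟨m, hmCC, hm0, hmm⟩ := S.SA5 (c*c) hccA (S.sq_nonneg _ hcA)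
  have hmA : m ∈ S.A := hmCC.1
  have hmc : m * c = c * m := hmCC.2 c ⟨hcA, by
    intro b hb
    rw [Set.mem_singleton_iff] at hb
    subst hb
    rw [← mul_assoc]⟩
  have hms : m * s = s * m := hmCC.2 s ⟨hsA, by
    intro b hb
    rw [Set.mem_singleton_iff] at hb
    subst hb
    exact hsc2⟩
  have hpcA : m + c ∈ S.A := S.add_mem hmA hcA
  obtain ⟨e, heA, he2, hecar⟩ := S.SA6 (m + c) hpcA
  have hpe : p * e = e * p := hP e ⟨heA, he2⟩
  have hse : s * e = e * s := by
    simp only [hs_def, sub_mul, mul_sub, add_mul, mul_add, one_mul, mul_one, hpe]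
  have hplus_e : (m + c) * e = m + c := by
    have h0 : (m + c) * (1 - e) = 0 :=
      (hecar (1 - e) (S.sub_mem' S.one_mem heA)).mpr (by rw [mul_sub, mul_one, he2, sub_self])
    rw [mul_sub, mul_one, sub_eq_zero] at h0
    exact h0.symm
  have hprod0 : (m + c) * (m - c) = 0 := by
    simp only [add_mul, mul_sub, hmm, hmc]; abel
  have heminus : e * (m - c) = 0 := (hecar (m - c) (S.sub_mem' hmA hcA)).mp hprod0
  have hms_expand : (m + c) * s = s * (m + c) - (s*c + s*c) := by
    rw [add_mul, mul_add, hcs, ← hms]; abel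
  have hway1 : ((m + c) * s) * e = (m + c) * s := by
    rw [mul_assoc, hse, ← mul_assoc, hplus_e]
  have hway2 : ((m + c) * s) * e = s * (m + c) - (s * (c * e) + s * (c * e)) := by
    rw [hms_expand, sub_mul, add_mul]
    simp only [mul_assoc]
    rw [hplus_e]
  have hkey : s * (c*e + c*e) = s * (c + c) := by
    have h := hway1.symm.trans hway2
    rw [hms_expand] at h
    have h2 : s*(c*e) + s*(c*e) = s*c + s*c := sub_right_injective h.symm
    rw [mul_add, mul_add, h2]
  have hce : c * e = c := by
    have h3 : c*e + c*e = c + c := by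
      have h4 := congrArg (fun x => s * x) hkey
      simpa only [← mul_assoc, hs2, one_mul] using h4
    calc c*e = (1/2:ℝ) • (c*e + c*e) := (half_two' _).symm
    _ = (1/2:ℝ) • (c + c) := by rw [h3]
    _ = c := half_two' _
  have hme : m * e = m := by
    have h5 := hplus_e
    rw [add_mul, hce] at h5
    exact add_right_cancel h5
  have hminus_e : (m - c) * e = m - c := by rw [sub_mul, hce, hme]
  have hsq0 : (m - c) * (m - c) = 0 := by
    calc (m-c)*(m-c) = ((m-c)*e)*(m-c) := by rw [hminus_e]
    _ = (m-c)*(e*(m-c)) := by rw [mul_assoc]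
    _ = 0 := by rw [heminus, mul_zero]
  have h01 : S.le 0 1 := by
    have := S.sq_nonneg 1 S.one_mem; rwa [one_mul] at this
  have hmceq : m - c = 0 := by
    have h6 := (S.SA4 (m - c) (S.sub_mem' hmA hcA) 1 S.one_mem h01 (by rw [mul_one, hsq0])).1
    rwa [mul_one] at h6
  have hcm : m = c := sub_eq_zero.mp hmceq
  have hcs_comm : s * c = c * s := by rw [← hcm, ← hms]
  have hsc0 : s * c = 0 := by
    have h7 : s*c = -(s*c) := hcs_comm.trans hcs
    have h8 : s*c + s*c = 0 := by nth_rewrite 2 [h7]; rw [add_neg_cancel]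
    calc s*c = (1/2:ℝ) • (s*c + s*c) := (half_two' _).symm
    _ = (1/2:ℝ) • (0:R) := by rw [h8]
    _ = 0 := smul_zero _
  have hsa : s * a = a * s := by
    have := hsc_eq
    rw [hsc0] at this
    exact (sub_eq_zero.mp this.symm)
  have h9 : p*a + p*a - a = a*p + a*p - a := by
    have h10 := hsa
    simp only [hs_def, sub_mul, mul_sub, add_mul, mul_add, one_mul, mul_one] at h10
    rw [h10]
  have h11 : p*a + p*a = a*p + a*p := sub_left_injective h9
  calc p*a = (1/2:ℝ) • (p*a + p*a) := (half_two' _).symm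
  _ = (1/2:ℝ) • (a*p + a*p) := by rw [h11]
  _ = a*p := half_two' _

end SynapticAlgebra

/-- Theorem 4.4: the center of the OML `P` (the projections Mackey-compatible
with every projection) equals `P ∩ C(P)` (the projections commuting with every
projection), and this in turn equals `P ∩ C(A)` (the projections commuting
with every element of `A`). -/
theorem stmt2 {R : Type*} [Ring R] [Algebra ℝ R] (S : SynapticAlgebra R) :
    {p | p ∈ S.Proj ∧ ∀ q ∈ S.Proj, S.Compatible p q} =
      {p | p ∈ S.Proj ∧ ∀ q ∈ S.Proj, p * q = q * p} ∧
    {p | p ∈ S.Proj ∧ ∀ q ∈ S.Proj, p * q = q * p} =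
      {p | p ∈ S.Proj ∧ ∀ a ∈ S.A, p * a = a * p} := by
  constructor
  · ext p
    simp only [Set.mem_setOf_eq]
    constructor
    · rintro ⟨hp, hcomp⟩
      refine ⟨hp, fun q hq => ?_⟩
      obtain ⟨p₁, hp₁, q₁, hq₁, d, hd, h1, h2, h3, h4, h5, h6, hpe, hqe⟩ := hcomp q hq
      rw [hpe, hqe]
      simp only [add_mul, mul_add, h1, h2, h3, h4, h5, h6, zero_add, add_zero]
    · rintro ⟨hp, hcomm⟩
      refine ⟨hp, fun q hq => ?_⟩
      obtain ⟨hpA, hp2⟩ := hp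
      obtain ⟨hqA, hq2⟩ := hq
      have hpq : p * q = q * p := hcomm q ⟨hqA, hq2⟩
      have hdA : p * q ∈ S.A := S.mul_mem_of_comm hpA hqA hpq
      have npp : ∀ x : R, p * (p * x) = p * x := fun x => by rw [← mul_assoc, hp2]
      have nqq : ∀ x : R, q * (q * x) = q * x := fun x => by rw [← mul_assoc, hq2]
      have nqp : ∀ x : R, q * (p * x) = p * (q * x) := fun x => by
        rw [← mul_assoc, ← hpq, mul_assoc]
      have nqp' : q * p = p * q := hpq.symm
      refine ⟨p - p*q, ⟨S.sub_mem' hpA hdA, ?_⟩, q - p*q, ⟨S.sub_mem' hqA hdA, ?_⟩,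
        p*q, ⟨hdA, ?_⟩, ?_, ?_, ?_, ?_, ?_, ?_, ?_, ?_⟩ <;>
      first
        | (simp only [mul_sub, sub_mul, mul_add, add_mul, mul_assoc, npp, nqq, nqp, nqp',
            hp2, hq2]
           try abel)
        | abel
  · ext p
    simp only [Set.mem_setOf_eq]
    constructor
    · rintro ⟨hp, hcomm⟩
      exact ⟨hp, fun a ha => S.comm_of_commP hp.1 hp.2 hcomm ha⟩
    · rintro ⟨hp, hcomm⟩
      exact ⟨hp, fun q hq => hcomm q hq.1⟩
end

section
/- Let A be a synaptic algebra, let t ∈ A be a partial symmetry that exchanges the projections e,f ∈ P (i.e., tet = f and tft = e), and let s := t + (1 − t²) be the canonical extension of t to a symmetry. Then s exchanges e and f, i.e., ses = f. -/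
/-- Theorem 5.5: if a partial symmetry `t` exchanges the projections `e` and
`f`, then its canonical extension `s := t + (1 - t²)` is a symmetry that
exchanges `e` and `f`. -/
theorem stmt5 {R : Type*} [Ring R] [Algebra ℝ R] (S : SynapticAlgebra R)
    (t e f : R) (ht : t ∈ S.A) (htps : t * t ∈ S.Proj)
    (he : e ∈ S.Proj) (hf : f ∈ S.Proj)
    (hef : t * e * t = f) (hfe : t * f * t = e) :
    (t + (1 - t * t)) * (t + (1 - t * t)) = 1 ∧
    (t + (1 - t * t)) * e * (t + (1 - t * t)) = f := by
  -- notation: p := t*t is a projection (htps.2 : (t*t)*(t*t) = t*t)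
  have hA2 : t * t ∈ S.A := S.sq_mem t ht
  have h4 : (t * t) * (t * t) = t * t := htps.2
  -- t³ ∈ A
  have hsum : t + t * t ∈ S.A := S.add_mem ht hA2
  have hsq : (t + t * t) * (t + t * t) ∈ S.A := S.sq_mem _ hsum
  have h4m : (t * t) * (t * t) ∈ S.A := S.sq_mem _ hA2
  have hcube_eq : ((1:ℝ)/2) • ((t + t * t) * (t + t * t) + (-1:ℝ) • (t * t)
      + (-1:ℝ) • ((t * t) * (t * t))) = t * (t * t) := by
    have h1 : (t + t * t) * (t + t * t) + (-1:ℝ) • (t * t)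
        + (-1:ℝ) • ((t * t) * (t * t)) = t * (t * t) + t * (t * t) := by
      simp only [neg_smul, one_smul]
      noncomm_ring
    rw [h1, ← two_smul ℝ, smul_smul]
    norm_num
  have hcube : t * (t * t) ∈ S.A := by
    rw [← hcube_eq]
    exact S.smul_mem _ (S.add_mem (S.add_mem hsq (S.smul_mem _ hA2)) (S.smul_mem _ h4m))
  have haA : t + (-1:ℝ) • (t * (t * t)) ∈ S.A := S.add_mem ht (S.smul_mem _ hcube)
  have haA' : t - t * (t * t) ∈ S.A := by
    have : t - t * (t * t) = t + (-1:ℝ) • (t * (t * t)) := by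
      simp only [neg_smul, one_smul]; rw [sub_eq_add_neg]
    rw [this]; exact haA
  have le01 : S.le 0 1 := by
    have := S.sq_nonneg 1 S.one_mem
    rwa [one_mul] at this
  -- (t - t³)² = 0
  have t4 : t * (t * (t * t)) = t * t := by rw [← mul_assoc]; exact h4
  have haa : (t - t * (t * t)) * (t - t * (t * t)) = 0 := by
    simp only [sub_mul, mul_sub]
    simp only [mul_assoc, t4]
    abel
  -- hence t³ = t by SA4 with b = 1
  have h3 : t * (t * t) = t := by
    have hmul : (t - t * (t * t)) * 1 * (t - t * (t * t)) = 0 := by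
      rw [mul_one, haa]
    have := (S.SA4 _ haA' 1 S.one_mem le01 hmul).1
    rw [mul_one] at this
    exact (sub_eq_zero.mp this).symm
  have h3' : t * t * t = t := by rw [mul_assoc]; exact h3
  -- s² = 1
  have hs2 : (t + (1 - t * t)) * (t + (1 - t * t)) = 1 := by
    have expand : (t + (1 - t * t)) * (t + (1 - t * t))
        = (t * t) + (t - t * t * t) + (t - t * t * t)
          + (1 - t * t - t * t + (t * t) * (t * t)) := by noncomm_ring
    rw [expand, h3', h4]
    abel
  refine ⟨hs2, ?_⟩
  -- (t*t) * e = e and e * (t*t) = e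
  have hpe : t * t * e = e := by
    rw [← hfe]
    calc t * t * (t * f * t) = (t * t * t) * f * t := by noncomm_ring
    _ = t * f * t := by rw [h3']
  have hep : e * (t * t) = e := by
    rw [← hfe]
    calc t * f * t * (t * t) = t * f * (t * t * t) := by noncomm_ring
    _ = t * f * t := by rw [h3']
  have h1 : (1 - t * t) * e = 0 := by rw [sub_mul, one_mul, hpe, sub_self]
  have h2 : e * (1 - t * t) = 0 := by rw [mul_sub, mul_one, hep, sub_self]
  calc (t + (1 - t * t)) * e * (t + (1 - t * t))
      = (t * e + (1 - t * t) * e) * (t + (1 - t * t)) := by rw [add_mul]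
    _ = (t * e) * (t + (1 - t * t)) := by rw [h1, add_zero]
    _ = t * e * t + t * (e * (1 - t * t)) := by noncomm_ring
    _ = f := by rw [h2, mul_zero, add_zero, hef]
end

section
/- Let A be a synaptic algebra with projection lattice P. For any projections e,f ∈ P there exists a symmetry s ∈ A such that s(efe)s = fef. -/
section Aux

variable {R : Type*} [Ring R] [Algebra ℝ R] (S : SynapticAlgebra R)

theorem SynapticAlgebra.sub_mem'_s7 {a b : R} (ha : a ∈ S.A) (hb : b ∈ S.A) :
    a - b ∈ S.A := by
  have h : a - b = a + (-1:ℝ) • b := by rw [neg_one_smul, sub_eq_add_neg]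
  rw [h]
  exact S.add_mem ha (S.smul_mem _ hb)

theorem SynapticAlgebra.jordan_mem {a b : R} (ha : a ∈ S.A) (hb : b ∈ S.A) :
    a * b + b * a ∈ S.A := by
  have h : a * b + b * a = (a + b) * (a + b) - a * a - b * b := by noncomm_ring
  rw [h]
  exact S.sub_mem'_s7 (S.sub_mem'_s7 (S.sq_mem _ (S.add_mem ha hb)) (S.sq_mem a ha)) (S.sq_mem b hb)

theorem SynapticAlgebra.triple_mem {a b : R} (ha : a ∈ S.A) (hb : b ∈ S.A) :
    a * b * a ∈ S.A := by
  have hj : a * b + b * a ∈ S.A := S.jordan_mem ha hb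
  have hj2 : (a * a) * b + b * (a * a) ∈ S.A := S.jordan_mem (S.sq_mem a ha) hb
  have hj3 : a * (a * b + b * a) + (a * b + b * a) * a ∈ S.A := S.jordan_mem ha hj
  have key : a * b * a = (1/2 : ℝ) •
      ((a * (a * b + b * a) + (a * b + b * a) * a) - ((a * a) * b + b * (a * a))) := by
    have h2 : (a * (a * b + b * a) + (a * b + b * a) * a) - ((a * a) * b + b * (a * a))
        = a * b * a + a * b * a := by noncomm_ring
    rw [h2, ← two_smul ℝ (a * b * a), smul_smul]
    norm_num
  rw [key]
  exact S.smul_mem _ (S.sub_mem'_s7 hj3 hj2)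

/-- The carrier projection of an element commutes with everything commuting
with that element. -/
theorem SynapticAlgebra.carrier_comm {a k y : R} (ha : a ∈ S.A) (hk : k ∈ S.A)
    (hkk : k * k = k) (hcar : ∀ b ∈ S.A, (a * b = 0 ↔ k * b = 0))
    (hy : y ∈ S.A) (hya : a * y = y * a) : k * y = y * k := by
  have hle01 : S.le 0 1 := by
    have h := S.sq_nonneg 1 S.one_mem
    rwa [one_mul] at h
  have h1k : (1:R) - k ∈ S.A := S.sub_mem'_s7 S.one_mem hk
  have hk1k : k * (1 - k) = 0 := by rw [mul_sub, mul_one, hkk, sub_self]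
  have hak : a * (1 - k) = 0 := (hcar _ h1k).mpr hk1k
  have hb1 : y * (1 - k) + (1 - k) * y ∈ S.A := S.jordan_mem hy h1k
  have hab1 : a * (y * (1 - k) + (1 - k) * y) = 0 := by
    rw [mul_add, ← mul_assoc, hya, mul_assoc, hak, mul_zero, ← mul_assoc, hak, zero_mul,
      add_zero]
  have hkb1 := (hcar _ hb1).mp hab1
  have hky : k * y * k = k * y := by
    have h3 : k * ((1 - k) * y) = 0 := by rw [← mul_assoc, hk1k, zero_mul]
    rw [mul_add, h3, add_zero] at hkb1
    have h4 : k * y * (1 - k) = 0 := by rw [mul_assoc]; exact hkb1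
    rw [mul_sub, mul_one, sub_eq_zero] at h4
    exact h4.symm
  set m := y - k * y * k - (1 - k) * y * (1 - k) with hmdef
  have hmA : m ∈ S.A := S.sub_mem'_s7 (S.sub_mem'_s7 hy (S.triple_mem hk hy)) (S.triple_mem h1k hy)
  have hmeq : m = y * k - k * y := by
    have hexp : (1 - k) * y * (1 - k) = y - y * k - k * y + k * y * k := by noncomm_ring
    rw [hmdef, hexp, hky]
    abel
  have hkm : k * m = 0 := by
    rw [hmeq, mul_sub, ← mul_assoc, ← mul_assoc, hkk, hky, sub_self]
  have hmk : m * k = m := by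
    rw [hmeq, sub_mul, mul_assoc, hkk, hky, ← hmeq]
  have hmm : m * 1 * m = 0 := by
    rw [mul_one]
    nth_rewrite 1 [← hmk]
    rw [mul_assoc, hkm, mul_zero]
  obtain ⟨hm1, -⟩ := S.SA4 m hmA 1 S.one_mem hle01 hmm
  rw [mul_one] at hm1
  have h5 : y * k - k * y = 0 := by rw [← hmeq, hm1]
  exact (sub_eq_zero.mp h5).symm

end Aux

/-- Theorem 5.8: for any projections `e, f ∈ P` there exists a symmetry
`s ∈ A` with `s(efe)s = fef`. -/
theorem stmt7 {R : Type*} [Ring R] [Algebra ℝ R] (S : SynapticAlgebra R)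
    (e f : R) (he : e ∈ S.Proj) (hf : f ∈ S.Proj) :
    ∃ s, S.IsSymmetry s ∧ s * (e * f * e) * s = f * e * f := by
  obtain ⟨heA, hee⟩ := he
  obtain ⟨hfA, hff⟩ := hf
  obtain ⟨x, hxdef⟩ : ∃ x : R, x = e + f - 1 := ⟨_, rfl⟩
  have hxA : x ∈ S.A := by rw [hxdef]; exact S.sub_mem'_s7 (S.add_mem heA hfA) S.one_mem
  -- basic word identities
  have hxf : x * f = e * f := by
    rw [hxdef, sub_mul, add_mul, hff, one_mul]; abel
  have hfx : f * x = f * e := by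
    rw [hxdef, mul_sub, mul_add, hff, mul_one]; abel
  have hxe : x * e = f * e := by
    rw [hxdef, sub_mul, add_mul, hee, one_mul]; abel
  have hex : e * x = e * f := by
    rw [hxdef, mul_sub, mul_add, hee, mul_one]; abel
  have hxfx : x * f * x = e * f * e := by
    rw [hxf, mul_assoc, hfx, ← mul_assoc]
  have hfxx : f * (x * x) = f * e * f := by
    rw [← mul_assoc, hfx, mul_assoc, hex, ← mul_assoc]
  have hxxf : (x * x) * f = f * e * f := by
    rw [mul_assoc, hxf, ← mul_assoc, hxe]
  -- square root of x²
  have htA : x * x ∈ S.A := S.sq_mem x hxA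
  have ht0 : S.le 0 (x * x) := S.sq_nonneg x hxA
  obtain ⟨u, humem, hu0, huu⟩ := S.SA5 (x * x) htA ht0
  obtain ⟨huA, huC⟩ := humem
  have hxmem : x ∈ SynComm S.A {x * x} := by
    refine ⟨hxA, ?_⟩
    intro b hb
    rw [Set.mem_singleton_iff] at hb
    subst hb
    rw [← mul_assoc]
  have hfmem : f ∈ SynComm S.A {x * x} := by
    refine ⟨hfA, ?_⟩
    intro b hb
    rw [Set.mem_singleton_iff] at hb
    subst hb
    rw [hfxx, hxxf]
  have hux : u * x = x * u := huC x hxmem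
  have huf : u * f = f * u := huC f hfmem
  -- positive and negative parts
  obtain ⟨aneg, hanegdef⟩ : ∃ z : R, z = (1/2 : ℝ) • (u - x) := ⟨_, rfl⟩
  obtain ⟨apos, haposdef⟩ : ∃ z : R, z = (1/2 : ℝ) • (u + x) := ⟨_, rfl⟩
  have hanegA : aneg ∈ S.A := by rw [hanegdef]; exact S.smul_mem _ (S.sub_mem'_s7 huA hxA)
  have haposA : apos ∈ S.A := by rw [haposdef]; exact S.smul_mem _ (S.add_mem huA hxA)
  have hax : aneg * x = x * aneg := by
    rw [hanegdef, smul_mul_assoc, mul_smul_comm, sub_mul, mul_sub, hux]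
  have h0 : (u - x) * (u + x) = 0 := by
    rw [sub_mul, mul_add, mul_add, huu, hux]; abel
  have hprod0 : aneg * apos = 0 := by
    rw [hanegdef, haposdef, smul_mul_assoc, mul_smul_comm, h0, smul_zero, smul_zero]
  have hsplit : apos - aneg = x := by
    rw [hanegdef, haposdef, ← smul_sub]
    have h1 : (u + x) - (u - x) = x + x := by abel
    rw [h1, ← two_smul ℝ x, smul_smul]
    norm_num
  have haneg2 : aneg + aneg = u - x := by
    rw [hanegdef, ← smul_add]
    have h1 : (u - x) + (u - x) = (2:ℝ) • (u - x) := (two_smul ℝ _).symm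
    rw [h1, smul_smul]
    norm_num
  -- carrier projection of aneg
  obtain ⟨k, hkA, hkk, hcar⟩ := S.SA6 aneg hanegA
  have h1kA : (1:R) - k ∈ S.A := S.sub_mem'_s7 S.one_mem hkA
  have hk1k : k * (1 - k) = 0 := by rw [mul_sub, mul_one, hkk, sub_self]
  have ha1k : aneg * (1 - k) = 0 := (hcar _ h1kA).mpr hk1k
  have hanegk : aneg * k = aneg := by
    rw [mul_sub, mul_one, sub_eq_zero] at ha1k
    exact ha1k.symm
  have hkaneg : k * aneg = aneg :=
    (S.carrier_comm hanegA hkA hkk hcar hanegA rfl).trans hanegk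
  have hkapos : k * apos = 0 := (hcar _ haposA).mp hprod0
  have hkx : k * x = x * k := S.carrier_comm hanegA hkA hkk hcar hxA hax
  have hkxval : k * x = -aneg := by
    have h : k * x = k * apos - k * aneg := by rw [← mul_sub, hsplit]
    rw [h, hkapos, hkaneg, zero_sub]
  -- the symmetry
  have hsA : (1:R) - (k + k) ∈ S.A := by
    have h : (1:R) - (k + k) = 1 + (-2:ℝ) • k := by
      rw [neg_smul, two_smul, ← sub_eq_add_neg]
    rw [h]
    exact S.add_mem S.one_mem (S.smul_mem _ hkA)
  have hss : ((1:R) - (k + k)) * ((1:R) - (k + k)) = 1 := by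
    have h : ((1:R) - (k + k)) * ((1:R) - (k + k))
        = 1 - (k + k) - (k + k) + (k + k) * (k + k) := by noncomm_ring
    have h2 : (k + k) * (k + k) = k + k + (k + k) := by
      rw [add_mul, mul_add, hkk]
    rw [h, h2]; abel
  have hsx : ((1:R) - (k + k)) * x = u := by
    have e1 : ((1:R) - (k + k)) * x = x - (k * x + k * x) := by noncomm_ring
    rw [e1, hkxval]
    have h : x - (-aneg + -aneg) = x + (aneg + aneg) := by abel
    rw [h, haneg2]; abel
  have hxs : x * ((1:R) - (k + k)) = u := by
    have e2 : x * ((1:R) - (k + k)) = x - (x * k + x * k) := by noncomm_ring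
    rw [e2, ← hkx, hkxval]
    have h : x - (-aneg + -aneg) = x + (aneg + aneg) := by abel
    rw [h, haneg2]; abel
  refine ⟨(1:R) - (k + k), ⟨hsA, hss⟩, ?_⟩
  rw [← hxfx]
  have hassoc : ((1:R) - (k + k)) * (x * f * x) * ((1:R) - (k + k))
      = (((1:R) - (k + k)) * x) * f * (x * ((1:R) - (k + k))) := by
    simp only [mul_assoc]
  rw [hassoc, hsx, hxs, huf, mul_assoc, huu, hfxx]
end
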